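/- Suppose N ⊂ 𝒱 is a finite dimensional symplectic submanifold of 𝒱 and f ∈ C^∞(𝒱,ℝ) satisfies Ξ_f(ρ) ∈ T_ρN ⊂ T_ρ𝒱 for all ρ ∈ N. If at a point ρ₀ ∈ N one has df(ρ₀) = 0, then the Hamiltonian map F := −i f''(ρ₀) (characterized by ⟨f''(ρ₀)X, Y⟩ = ω(Y, FX)) satisfies F(T_{ρ₀}N) ⊂ T_{ρ₀}N. -/

import Mathlib

noncomputable section

set_option maxHeartbeats 1000000

/-- **Lemma 2.2.**  Let `𝒱` (here `𝒱 = H¹(ℝ³;ℂ)` viewed as a real Hilbert space,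
formalized as a complex inner product space `V`) carry the symplectic form
`ω(u,v) = Im ∫ u v̄ = -(Im ⟪u,v⟫)`.  Let `N ⊂ 𝒱` be a finite dimensional symplectic
submanifold (realized as the image of a smooth injective immersion
`ψ : ℝⁿ → 𝒱` on whose tangent spaces `ω` is nondegenerate), and let
`f ∈ C^∞(𝒱,ℝ)` satisfy `Ξ_f(ρ) ∈ T_ρN` for all `ρ ∈ N`.  If `df(ρ₀) = 0` at a
point `ρ₀ = ψ(p₀) ∈ N`, then the Hamiltonian map `F = -i f''(ρ₀)`, characterized by
`⟨f''(ρ₀)X, Y⟩ = ω(Y, FX)`, satisfies `F(T_{ρ₀}N) ⊂ T_{ρ₀}N`. -/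
theorem hamiltonian_map_preserves_tangent
    (V : Type*) [NormedAddCommGroup V] [InnerProductSpace ℂ V]
    (ω : V → V → ℝ)
    (hω : ∀ u v : V, ω u v = -(inner ℂ u v : ℂ).im)
    -- N : a finite dimensional symplectic submanifold, as an injective immersion
    (n : ℕ) (ψ : EuclideanSpace ℝ (Fin n) → V)
    (hψ : ContDiff ℝ (⊤ : ℕ∞) ψ) (hinj : Function.Injective ψ)
    (himm : ∀ p, Function.Injective (fderiv ℝ ψ p))
    (hsymp : ∀ p, ∀ X ∈ Set.range ⇑(fderiv ℝ ψ p),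
      (∀ Y ∈ Set.range ⇑(fderiv ℝ ψ p), ω Y X = 0) → X = 0)
    -- f smooth, with Hamiltonian vector field Ξf tangent to N along N
    (f : V → ℝ) (hf : ContDiff ℝ (⊤ : ℕ∞) f)
    (Ξf : V → V) (hΞf : ∀ u v : V, ω v (Ξf u) = fderiv ℝ f u v)
    (htang : ∀ p, Ξf (ψ p) ∈ Set.range ⇑(fderiv ℝ ψ p))
    -- a critical point ρ₀ ∈ N of f, and the Hamiltonian map F = -i f''(ρ₀)
    (p₀ : EuclideanSpace ℝ (Fin n)) (ρ₀ : V) (hρ₀ : ψ p₀ = ρ₀)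
    (hcrit : fderiv ℝ f ρ₀ = 0)
    (F : V → V)
    (hF : ∀ X Y : V, fderiv ℝ (fun u => fderiv ℝ f u Y) ρ₀ X = ω Y (F X)) :
    ∀ X ∈ Set.range ⇑(fderiv ℝ ψ p₀), F X ∈ Set.range ⇑(fderiv ℝ ψ p₀) := by
  intro X hX
  obtain ⟨e, he⟩ := hX
  set A₀ : EuclideanSpace ℝ (Fin n) →L[ℝ] V := fderiv ℝ ψ p₀ with hA₀def
  -- the curve through ρ₀
  set c : ℝ → V := fun t => ψ (p₀ + t • e) with hcdef
  have hc0 : c 0 = ρ₀ := by simp [hcdef, hρ₀]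
  -- G = df, D = f''(ρ₀)
  set G : V → (V →L[ℝ] ℝ) := fderiv ℝ f with hGdef
  have hGdiff : Differentiable ℝ G := (hf.fderiv_right (m := 1) (WithTop.coe_le_coe.mpr le_top)).differentiable one_ne_zero
  set D : V →L[ℝ] (V →L[ℝ] ℝ) := fderiv ℝ G ρ₀ with hDdef
  have hGd : HasFDerivAt G D ρ₀ := (hGdiff ρ₀).hasFDerivAt
  -- the curve has derivative X at 0
  have hcurve : HasDerivAt (fun t : ℝ => p₀ + t • e) e 0 := by
    simpa using ((hasDerivAt_id (0 : ℝ)).smul_const e).const_add p₀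
  have hψp : HasFDerivAt ψ A₀ (p₀ + (0 : ℝ) • e) := by
    have hp : p₀ + (0 : ℝ) • e = p₀ := by simp
    rw [hp, hA₀def]
    exact ((hψ.differentiable (by simp)) p₀).hasFDerivAt
  have hcd : HasDerivAt c X 0 := by
    have := hψp.comp_hasDerivAt 0 hcurve
    simpa [hcdef, Function.comp_def, he] using this
  -- G ∘ c has derivative D X at 0
  have hGc : HasDerivAt (fun t => G (c t)) (D X) 0 := by
    refine HasFDerivAt.comp_hasDerivAt 0 ?_ hcd
    rwa [hc0]
  have hslope : Filter.Tendsto (slope (fun t => G (c t)) 0) (nhdsWithin 0 {(0:ℝ)}ᶜ)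
      (nhds (D X)) := hasDerivAt_iff_tendsto_slope.mp hGc
  have hLnorm : Filter.Tendsto (fun t => ‖slope (fun s => G (c s)) 0 t - D X‖)
      (nhdsWithin 0 {(0:ℝ)}ᶜ) (nhds 0) :=
    tendsto_iff_norm_sub_tendsto_zero.mp hslope
  -- (D X) Y = ω Y (F X)
  have hDX : ∀ Y : V, (D X) Y = ω Y (F X) := by
    intro Y
    have h1 : HasFDerivAt (fun u => G u Y) ((ContinuousLinearMap.apply ℝ ℝ Y).comp D) ρ₀ :=
      (ContinuousLinearMap.apply ℝ ℝ Y).hasFDerivAt.comp ρ₀ hGd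
    have h2 := h1.fderiv
    have h3 := hF X Y
    rw [h2] at h3
    simpa using h3
  -- linearity facts about ω
  have ωlin : ∀ (Y v w : V) (t : ℝ), ω Y (t • v - w) = t * ω Y v - ω Y w := by
    intro Y v w t
    rw [hω, hω, hω, inner_sub_right, ← Complex.coe_smul, inner_smul_right]
    simp [Complex.mul_im]
    ring
  have ωself : ∀ z : V, ω ((Complex.I : ℂ) • z) z = ‖z‖ ^ 2 := by
    intro z
    rw [hω, inner_smul_left, inner_self_eq_norm_sq_to_K]
    simp [Complex.mul_im, ← Complex.ofReal_pow]
  -- the key norm bound for t ≠ 0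
  have hbound : ∀ t : ℝ, t ≠ 0 →
      ‖t⁻¹ • Ξf (c t) - F X‖ ≤ ‖slope (fun s => G (c s)) 0 t - D X‖ := by
    intro t ht
    set z : V := t⁻¹ • Ξf (c t) - F X with hz
    set L : V →L[ℝ] ℝ := slope (fun s => G (c s)) 0 t - D X with hL
    have hωz : ∀ Y : V, ω Y z = L Y := by
      intro Y
      have e1 : ω Y z = t⁻¹ * ω Y (Ξf (c t)) - ω Y (F X) := ωlin Y _ _ _
      have e2 : ω Y (Ξf (c t)) = G (c t) Y := hΞf (c t) Y
      have e3 : ω Y (F X) = (D X) Y := (hDX Y).symm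
      have e4 : L Y = t⁻¹ * (G (c t) Y) - (D X) Y := by
        have hg0 : G (c 0) = 0 := by rw [hc0]; exact hcrit
        rw [hL, ContinuousLinearMap.sub_apply, slope_def_module, hg0, sub_zero, sub_zero,
          ContinuousLinearMap.smul_apply, smul_eq_mul]
      rw [e1, e2, e3, e4]
    by_cases hz0 : z = 0
    · rw [hz0]
      simp [norm_nonneg]
    · have h1 : ‖z‖ ^ 2 = L ((Complex.I : ℂ) • z) := by
        rw [← hωz]; exact (ωself z).symm
      have h2 : L ((Complex.I : ℂ) • z) ≤ ‖L‖ * ‖z‖ := by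
        calc L ((Complex.I : ℂ) • z) ≤ |L ((Complex.I : ℂ) • z)| := le_abs_self _
        _ ≤ ‖L‖ * ‖(Complex.I : ℂ) • z‖ := L.le_opNorm _
        _ = ‖L‖ * ‖z‖ := by rw [norm_smul]; simp
      have h3 : 0 < ‖z‖ := norm_pos_iff.mpr hz0
      have h4 : ‖z‖ * ‖z‖ ≤ ‖L‖ * ‖z‖ := by
        calc ‖z‖ * ‖z‖ = ‖z‖ ^ 2 := (sq ‖z‖).symm
        _ = L ((Complex.I : ℂ) • z) := h1
        _ ≤ ‖L‖ * ‖z‖ := h2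
      exact le_of_mul_le_mul_right h4 h3
  -- convergence of the rescaled Hamiltonian field to F X
  have hmain : Filter.Tendsto (fun t => t⁻¹ • Ξf (c t)) (nhdsWithin 0 {(0:ℝ)}ᶜ)
      (nhds (F X)) := by
    rw [tendsto_iff_norm_sub_tendsto_zero]
    refine squeeze_zero' (Filter.Eventually.of_forall fun t => norm_nonneg _) ?_ hLnorm
    filter_upwards [self_mem_nhdsWithin] with t ht
    exact hbound t ht
  -- antilipschitz bound for A₀
  obtain ⟨K, hK0, hKa⟩ := (A₀ : EuclideanSpace ℝ (Fin n) →ₗ[ℝ] V).exists_antilipschitzWith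
    (LinearMap.ker_eq_bot.mpr (himm p₀))
  have hKb : ∀ x : EuclideanSpace ℝ (Fin n), ‖x‖ ≤ K * ‖A₀ x‖ := by
    intro x
    have := hKa.le_mul_dist x 0
    simpa [dist_eq_norm] using this
  -- continuity of the derivative along the curve
  have hAcont : Filter.Tendsto (fun t : ℝ => ‖fderiv ℝ ψ (p₀ + t • e) - A₀‖)
      (nhdsWithin 0 {(0:ℝ)}ᶜ) (nhds 0) := by
    have h1 : Continuous (fun t : ℝ => fderiv ℝ ψ (p₀ + t • e)) :=
      (hψ.continuous_fderiv (by simp)).comp (continuous_const.add (continuous_id.smul continuous_const))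
    have h2 : Filter.Tendsto (fun t : ℝ => ‖fderiv ℝ ψ (p₀ + t • e) - A₀‖) (nhds 0)
        (nhds ‖fderiv ℝ ψ (p₀ + (0:ℝ) • e) - A₀‖) :=
      ((h1.sub continuous_const).norm).tendsto 0
    have h3 : ‖fderiv ℝ ψ (p₀ + (0:ℝ) • e) - A₀‖ = 0 := by
      simp [hA₀def]
    rw [h3] at h2
    exact h2.mono_left nhdsWithin_le_nhds
  -- the tangent space is closed
  have hTclosed : IsClosed (Set.range ⇑A₀) := by
    have : Set.range ⇑A₀ = (LinearMap.range (A₀ : EuclideanSpace ℝ (Fin n) →ₗ[ℝ] V) : Set V) := by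
      simp [LinearMap.coe_range]
    rw [this]
    exact Submodule.closed_of_finiteDimensional _
  have hTne : (Set.range ⇑A₀).Nonempty := ⟨A₀ 0, Set.mem_range_self _⟩
  -- for small t, the rescaled field is close to the tangent space
  have hsmall : ∀ᶠ t in nhdsWithin 0 {(0:ℝ)}ᶜ,
      Metric.infDist (F X) (Set.range ⇑A₀) ≤
        dist (F X) (t⁻¹ • Ξf (c t)) +
          ‖fderiv ℝ ψ (p₀ + t • e) - A₀‖ * (2 * K * ‖t⁻¹ • Ξf (c t)‖) := by
    have hev : ∀ᶠ t in nhdsWithin 0 {(0:ℝ)}ᶜ,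
        ‖fderiv ℝ ψ (p₀ + t • e) - A₀‖ < (2 * K)⁻¹ := by
      have hpos : (0:ℝ) < (2 * K)⁻¹ := by positivity
      exact hAcont.eventually (gt_mem_nhds hpos)
    filter_upwards [hev, self_mem_nhdsWithin] with t hAt ht
    set B : EuclideanSpace ℝ (Fin n) →L[ℝ] V := fderiv ℝ ψ (p₀ + t • e) with hB
    obtain ⟨ξ, hξ⟩ := htang (p₀ + t • e)
    -- bound ‖ξ‖ by 2K‖Ξf (c t)‖
    have hξb : ‖ξ‖ ≤ 2 * K * ‖Ξf (c t)‖ := by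
      have h1 : ‖ξ‖ ≤ K * ‖A₀ ξ‖ := hKb ξ
      have h2 : ‖A₀ ξ‖ ≤ ‖B ξ‖ + ‖(A₀ - B) ξ‖ := by
        have : A₀ ξ = B ξ + (A₀ - B) ξ := by simp
        rw [this]; exact norm_add_le _ _
      have h3 : ‖(A₀ - B) ξ‖ ≤ ‖A₀ - B‖ * ‖ξ‖ := (A₀ - B).le_opNorm ξ
      have h4 : ‖A₀ - B‖ = ‖B - A₀‖ := by rw [norm_sub_rev]
      have h5 : ‖B - A₀‖ ≤ (2 * K)⁻¹ := le_of_lt hAt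
      have h6 : ‖B ξ‖ = ‖Ξf (c t)‖ := by rw [hξ]
      have hK' : (0:ℝ) < K := hK0
      have h7 : ‖ξ‖ ≤ K * ‖Ξf (c t)‖ + K * ((2 * K)⁻¹ * ‖ξ‖) := by
        calc ‖ξ‖ ≤ K * ‖A₀ ξ‖ := h1
        _ ≤ K * (‖Ξf (c t)‖ + ‖A₀ - B‖ * ‖ξ‖) := by
            apply mul_le_mul_of_nonneg_left _ (le_of_lt hK')
            rw [← h6]; exact h2.trans (add_le_add_right h3 _)
        _ ≤ K * (‖Ξf (c t)‖ + (2 * K)⁻¹ * ‖ξ‖) := by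
            apply mul_le_mul_of_nonneg_left _ (le_of_lt hK')
            apply add_le_add_right
            apply mul_le_mul_of_nonneg_right _ (norm_nonneg _)
            rw [h4]; exact h5
        _ = K * ‖Ξf (c t)‖ + K * ((2 * K)⁻¹ * ‖ξ‖) := by ring
      have h8 : K * ((2 * K)⁻¹ * ‖ξ‖) = ‖ξ‖ / 2 := by
        push_cast
        field_simp
      rw [h8] at h7
      linarith
    -- the distance estimate
    have hy : A₀ (t⁻¹ • ξ) ∈ Set.range ⇑A₀ := Set.mem_range_self _
    calc Metric.infDist (F X) (Set.range ⇑A₀) ≤ dist (F X) (A₀ (t⁻¹ • ξ)) :=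
          Metric.infDist_le_dist_of_mem hy
    _ ≤ dist (F X) (t⁻¹ • Ξf (c t)) + dist (t⁻¹ • Ξf (c t)) (A₀ (t⁻¹ • ξ)) :=
          dist_triangle _ _ _
    _ ≤ dist (F X) (t⁻¹ • Ξf (c t)) + ‖B - A₀‖ * (2 * K * ‖t⁻¹ • Ξf (c t)‖) := by
        apply add_le_add_right
        have e1 : t⁻¹ • Ξf (c t) - A₀ (t⁻¹ • ξ) = (B - A₀) (t⁻¹ • ξ) := by
          have hBξ : B ξ = Ξf (c t) := hξ
          simp only [ContinuousLinearMap.sub_apply, map_smul, hBξ, smul_sub]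
        rw [dist_eq_norm, e1]
        calc ‖(B - A₀) (t⁻¹ • ξ)‖ ≤ ‖B - A₀‖ * ‖t⁻¹ • ξ‖ := (B - A₀).le_opNorm _
        _ ≤ ‖B - A₀‖ * (2 * K * ‖t⁻¹ • Ξf (c t)‖) := by
            apply mul_le_mul_of_nonneg_left _ (norm_nonneg _)
            rw [norm_smul, norm_smul]
            calc ‖(t⁻¹ : ℝ)‖ * ‖ξ‖ ≤ ‖(t⁻¹ : ℝ)‖ * (2 * K * ‖Ξf (c t)‖) :=
                  mul_le_mul_of_nonneg_left hξb (norm_nonneg _)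
            _ = 2 * K * (‖(t⁻¹ : ℝ)‖ * ‖Ξf (c t)‖) := by ring
  -- conclude : infDist (F X) T = 0
  have hRHS : Filter.Tendsto (fun t => dist (F X) (t⁻¹ • Ξf (c t)) +
      ‖fderiv ℝ ψ (p₀ + t • e) - A₀‖ * (2 * K * ‖t⁻¹ • Ξf (c t)‖))
      (nhdsWithin 0 {(0:ℝ)}ᶜ) (nhds (0 + 0 * (2 * K * ‖F X‖))) := by
    refine Filter.Tendsto.add ?_ (hAcont.mul ?_)
    · have hd : Filter.Tendsto (fun t => dist (F X) (t⁻¹ • Ξf (c t)))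
          (nhdsWithin 0 {(0:ℝ)}ᶜ) (nhds (dist (F X) (F X))) :=
        Filter.Tendsto.dist tendsto_const_nhds hmain
      simpa using hd
    · exact (tendsto_const_nhds.mul hmain.norm)
  have hzero : Metric.infDist (F X) (Set.range ⇑A₀) ≤ 0 := by
    have h0 : (0:ℝ) + 0 * (2 * K * ‖F X‖) = 0 := by ring
    rw [h0] at hRHS
    exact ge_of_tendsto hRHS hsmall
  have hdz : Metric.infDist (F X) (Set.range ⇑A₀) = 0 :=
    le_antisymm hzero (Metric.infDist_nonneg)
  exact (hTclosed.mem_iff_infDist_zero hTne).mpr hdz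

end
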